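/- arXiv:2506.06653 — 2 statements merged into one kernel-verified Lean document; each statement's English description precedes it below -/
import Mathlib

section
/- Pairwise Monotonicity for the Shapley value: if v(S∪{i}) ≤ v(S∪{j}) for all S ⊆ M\{i,j}, then SH_i(v) ≤ SH_j(v). -/
/-! Write `T = M \ {i, j}`. Each coalition without `i` is either some `S ⊆ T` or `S ∪ {j}`, and the
Shapley weight depends only on the size, so `SH_j - SH_i = ∑_{S ⊆ T} (w_|S| + w_{|S|+1}) ·
(v (S ∪ {j}) - v (S ∪ {i}))`: the terms `v S` and `v (S ∪ {i, j})` cancel. Every summand is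
nonnegative by hypothesis. -/

open Finset MeasureTheory ProbabilityTheory

noncomputable def SH {m : ℕ} (v : Finset (Fin m) → ℝ) (i : Fin m) : ℝ :=
  ∑ S ∈ (Finset.univ.erase i).powerset,
    ((S.card.factorial * (m - S.card - 1).factorial : ℝ) / m.factorial) *
      (v (insert i S) - v S)

noncomputable def shapleyWeight (m k : ℕ) : ℝ :=
  (k.factorial * (m - k - 1).factorial : ℝ) / m.factorial

lemma shapleyWeight_nonneg (m k : ℕ) : 0 ≤ shapleyWeight m k := by
  unfold shapleyWeight
  positivity

lemma erase_eq_insert_sdiff_pair {α : Type*} [Fintype α] [DecidableEq α] {i j : α}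
    (hij : i ≠ j) : (univ.erase i : Finset α) = insert j (univ \ {i, j}) := by
  ext x
  by_cases hxj : x = j
  · simp [hxj, hij.symm]
  · simp [hxj]

lemma SH_eq_sum_powerset_sdiff_pair {m : ℕ} (v : Finset (Fin m) → ℝ) {i j : Fin m}
    (hij : i ≠ j) :
    SH v i = ∑ S ∈ (univ \ {i, j}).powerset,
      (shapleyWeight m #S * (v (insert i S) - v S) +
        shapleyWeight m (#S + 1) * (v (insert i (insert j S)) - v (insert j S))) := by
  have hj : j ∉ (univ \ {i, j} : Finset (Fin m)) := by simp
  rw [SH, erase_eq_insert_sdiff_pair hij, sum_powerset_insert hj, ← sum_add_distrib]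
  refine sum_congr rfl fun S hS => ?_
  rw [card_insert_of_notMem fun h => hj (mem_powerset.mp hS h)]
  rfl

theorem shapley_pairwise_monotonicity_general {m : ℕ} (v : Finset (Fin m) → ℝ)
    (i j : Fin m) (hij : i ≠ j)
    (hmono : ∀ S ∈ (Finset.univ \ {i, j} : Finset (Fin m)).powerset,
      v (insert i S) ≤ v (insert j S)) :
    SH v i ≤ SH v j := by
  rw [SH_eq_sum_powerset_sdiff_pair v hij, SH_eq_sum_powerset_sdiff_pair v hij.symm,
    pair_comm j i]
  refine sum_le_sum fun S hS => ?_
  have hweight := add_nonneg (shapleyWeight_nonneg m #S) (shapleyWeight_nonneg m (#S + 1))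
  have hgain := mul_le_mul_of_nonneg_left (hmono S hS) hweight
  rw [insert_comm j i S]
  linarith

theorem shapley_pairwise_monotonicity {m : ℕ} (v : Finset (Fin m) → ℝ) (hv : v ∅ = 0)
    (i j : Fin m) (hij : i ≠ j)
    (hmono : ∀ S ∈ (Finset.univ \ {i, j} : Finset (Fin m)).powerset,
      v (insert i S) ≤ v (insert j S)) :
    SH v i ≤ SH v j :=
  shapley_pairwise_monotonicity_general v i j hij hmono
end

section
/- Incompatibility of Linearity with Completeness and Dummy for risk attribution methods: there exist random variables X₁, X₂ with standard deviations σ₁, σ₂ > 0 and correlation ρ ∈ (−1,1) such that no attribution method A satisfying Completeness (Σᵢ Aᵢ(h) = STD(h(X₁,X₂)) for each h), Dummy (Aᵢ(h) = 0 when h does not depend on xᵢ), and Linearity (Aᵢ(f+g) = Aᵢ(f)+Aᵢ(g)) exists; concretely, taking f(x₁,x₂)=x₁ and g(x₁,x₂)=x₂, these axioms force σ₁ + σ₂ = √(σ₁² + σ₂² + 2ρσ₁σ₂), which fails whenever ρ < 1 and σ₁σ₂ > 0. -/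
/-!
Summing Linearity over the players and applying Completeness makes the risk measure itself
additive, so STD(X₁ + X₂) = σ₁ + σ₂; but standard deviation is strictly subadditive as soon as
ρ < 1.
-/

theorem risk_add_of_complete_of_linear {ι F : Type*} [Fintype ι] [Add F]
    {Risk : F → ℝ} {A : ι → F → ℝ} (hcomp : ∀ h, ∑ i, A i h = Risk h)
    (hlin : ∀ f g i, A i (f + g) = A i f + A i g) (f g : F) :
    Risk (f + g) = Risk f + Risk g := by
  simp only [← hcomp, hlin, Finset.sum_add_distrib]

theorem sqrt_sq_add_sq_add_mul_lt_add {a b ρ : ℝ} (ha : 0 < a) (hb : 0 < b) (hρ : ρ < 1) :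
    √(a ^ 2 + b ^ 2 + 2 * ρ * a * b) < a + b := by
  rw [Real.sqrt_lt' (by positivity)]
  nlinarith [mul_pos (mul_pos ha hb) (sub_pos.2 hρ)]

theorem linearity_incompatible_with_completeness_dummy
    (σ₁ σ₂ ρ : ℝ) (h1 : 0 < σ₁) (h2 : 0 < σ₂) (hρ : ρ ∈ Set.Ioo (-1 : ℝ) 1)
    (Risk : (ℝ → ℝ → ℝ) → ℝ)
    (hX : Risk (fun x _ => x) = σ₁)
    (hY : Risk (fun _ y => y) = σ₂)
    (hXY : Risk (fun x y => x + y) = Real.sqrt (σ₁ ^ 2 + σ₂ ^ 2 + 2 * ρ * σ₁ * σ₂)) :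
    ¬ ∃ A : Fin 2 → (ℝ → ℝ → ℝ) → ℝ,
      (∀ h : ℝ → ℝ → ℝ, A 0 h + A 1 h = Risk h) ∧
      (∀ h : ℝ → ℝ → ℝ, (∀ x x' y, h x y = h x' y) → A 0 h = 0) ∧
      (∀ h : ℝ → ℝ → ℝ, (∀ x y y', h x y = h x y') → A 1 h = 0) ∧
      (∀ (f g : ℝ → ℝ → ℝ) (i : Fin 2),
        A i (fun x y => f x y + g x y) = A i f + A i g) := by
  rintro ⟨A, hcomp, -, -, hlin⟩
  have hadd : Risk (fun x y => x + y) = Risk (fun x _ => x) + Risk (fun _ y => y) :=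
    risk_add_of_complete_of_linear (fun h => by rw [Fin.sum_univ_two, hcomp]) hlin _ _
  rw [hXY, hX, hY] at hadd
  exact (sqrt_sq_add_sq_add_mul_lt_add h1 h2 hρ.2).ne hadd
end
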